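/- arXiv:1805.11387 — 2 statements merged into one kernel-verified Lean document; each statement's English description precedes it below -/
import Mathlib

section
/- For all r ≥ 0 one has φ(R₀) r / 2 ≤ Φ(r)/2 ≤ f(r) ≤ Φ(r) ≤ r. -/
open MeasureTheory Real Set
open scoped RealInnerProductSpace

/-- `φ(r) = exp(−(1/4) ∫₀^r s κ₋(s) ds)` where `κ₋ = max(0, −κ)`. -/
noncomputable def phiF (κ : ℝ → ℝ) (r : ℝ) : ℝ :=
  Real.exp (-(1 / 4) * ∫ s in (0:ℝ)..r, s * max 0 (-κ s))

/-- `Φ(r) = ∫₀^r φ(s) ds`. -/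
noncomputable def PhiF (κ : ℝ → ℝ) (r : ℝ) : ℝ := ∫ s in (0:ℝ)..r, phiF κ s

/-- `R₀ = inf {s ≥ 0 : κ(r) ≥ 0 for all r ≥ s}`. -/
noncomputable def R0 (κ : ℝ → ℝ) : ℝ := sInf {s : ℝ | 0 ≤ s ∧ ∀ r, s ≤ r → 0 ≤ κ r}

/-- `R₁ = inf {s ≥ R₀ : s(s − R₀)κ(r) ≥ 8 for all r ≥ s}`. -/
noncomputable def R1 (κ : ℝ → ℝ) : ℝ :=
  sInf {s : ℝ | R0 κ ≤ s ∧ ∀ r, s ≤ r → 8 ≤ s * (s - R0 κ) * κ r}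

/-- `c = (∫₀^{R₁} Φ(s) φ(s)⁻¹ ds)⁻¹`. -/
noncomputable def cF (κ : ℝ → ℝ) : ℝ := (∫ s in (0:ℝ)..R1 κ, PhiF κ s / phiF κ s)⁻¹

/-- `g(r) = 1 − (c/2) ∫₀^{min(r,R₁)} Φ(s) φ(s)⁻¹ ds`. -/
noncomputable def gF (κ : ℝ → ℝ) (r : ℝ) : ℝ :=
  1 - cF κ / 2 * ∫ s in (0:ℝ)..min r (R1 κ), PhiF κ s / phiF κ s

/-- `f(r) = ∫₀^r φ(s) g(s) ds`. -/
noncomputable def fF (κ : ℝ → ℝ) (r : ℝ) : ℝ := ∫ s in (0:ℝ)..r, phiF κ s * gF κ s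

section Aux

variable {κ : ℝ → ℝ}

private lemma S_nonempty (hκliminf : ∃ ε > (0 : ℝ), ∃ R : ℝ, ∀ r ≥ R, ε ≤ κ r) :
    {s : ℝ | 0 ≤ s ∧ ∀ r, s ≤ r → 0 ≤ κ r}.Nonempty := by
  obtain ⟨ε, hε, R, hR⟩ := hκliminf
  exact ⟨max R 0, le_max_right _ _, fun r hr =>
    hε.le.trans (hR r ((le_max_left _ _).trans hr))⟩

private lemma R0_nonneg (hκliminf : ∃ ε > (0 : ℝ), ∃ R : ℝ, ∀ r ≥ R, ε ≤ κ r) :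
    0 ≤ R0 κ :=
  le_csInf (S_nonempty hκliminf) fun _ hs => hs.1

private lemma kappa_nonneg_of_lt (hκliminf : ∃ ε > (0 : ℝ), ∃ R : ℝ, ∀ r ≥ R, ε ≤ κ r)
    {r : ℝ} (hr : R0 κ < r) : 0 ≤ κ r := by
  obtain ⟨s, hs, hsr⟩ := exists_lt_of_csInf_lt (S_nonempty hκliminf) hr
  exact hs.2 r hsr.le

private lemma kappa_nonneg (hκcont : ContinuousOn κ (Set.Ici 0))
    (hκliminf : ∃ ε > (0 : ℝ), ∃ R : ℝ, ∀ r ≥ R, ε ≤ κ r)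
    {r : ℝ} (hr : R0 κ ≤ r) : 0 ≤ κ r := by
  rcases eq_or_lt_of_le hr with h | h
  · have h0 : (0:ℝ) ≤ r := h ▸ R0_nonneg hκliminf
    have hc : ContinuousWithinAt κ (Set.Ici 0) r := hκcont r h0
    have hsub : Set.Ioi r ⊆ Set.Ici (0:ℝ) := fun x hx => le_of_lt (lt_of_le_of_lt h0 hx)
    have h2 : Filter.Tendsto κ (nhdsWithin r (Set.Ioi r)) (nhds (κ r)) :=
      hc.tendsto.mono_left (nhdsWithin_mono r hsub)
    refine ge_of_tendsto h2 ?_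
    filter_upwards [self_mem_nhdsWithin] with x hx
    exact kappa_nonneg_of_lt hκliminf (h ▸ hx)
  · exact kappa_nonneg_of_lt hκliminf h

private lemma negpart_contOn (hκcont : ContinuousOn κ (Set.Ici 0)) :
    ContinuousOn (fun s : ℝ => s * max 0 (-κ s)) (Set.Ici 0) :=
  continuousOn_id.mul (continuousOn_const.sup hκcont.neg)

private lemma uIcc_subset_Ici {a b : ℝ} (ha : 0 ≤ a) (hb : 0 ≤ b) :
    Set.uIcc a b ⊆ Set.Ici (0:ℝ) := fun x hx => (le_min ha hb).trans hx.1

private lemma negpart_intInt (hκcont : ContinuousOn κ (Set.Ici 0)) {a b : ℝ}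
    (ha : 0 ≤ a) (hb : 0 ≤ b) :
    IntervalIntegrable (fun s : ℝ => s * max 0 (-κ s)) volume a b :=
  ((negpart_contOn hκcont).mono (uIcc_subset_Ici ha hb)).intervalIntegrable

private lemma negpart_nonneg (s : ℝ) (hs : 0 ≤ s) : 0 ≤ s * max 0 (-κ s) :=
  mul_nonneg hs (le_max_left _ _)

/-- The primitive `I r = ∫₀^r s κ₋(s) ds` is monotone on `[0,∞)`. -/
private lemma I_mono (hκcont : ContinuousOn κ (Set.Ici 0)) {a b : ℝ} (ha : 0 ≤ a)
    (hab : a ≤ b) :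
    (∫ s in (0:ℝ)..a, s * max 0 (-κ s)) ≤ ∫ s in (0:ℝ)..b, s * max 0 (-κ s) := by
  have hb : 0 ≤ b := ha.trans hab
  have hadd := intervalIntegral.integral_add_adjacent_intervals
    (negpart_intInt hκcont le_rfl ha) (negpart_intInt hκcont ha hb)
  have hnn : 0 ≤ ∫ s in a..b, s * max 0 (-κ s) :=
    intervalIntegral.integral_nonneg hab fun u hu => negpart_nonneg u (ha.trans hu.1)
  linarith

private lemma I_nonneg (hκcont : ContinuousOn κ (Set.Ici 0)) {r : ℝ} (hr : 0 ≤ r) :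
    0 ≤ ∫ s in (0:ℝ)..r, s * max 0 (-κ s) :=
  intervalIntegral.integral_nonneg hr fun u hu => negpart_nonneg u hu.1

private lemma phiF_pos (r : ℝ) : 0 < phiF κ r := Real.exp_pos _

private lemma phiF_le_one (hκcont : ContinuousOn κ (Set.Ici 0)) {r : ℝ} (hr : 0 ≤ r) :
    phiF κ r ≤ 1 := by
  rw [phiF, Real.exp_le_one_iff]
  have := I_nonneg hκcont hr
  nlinarith

private lemma phiF_anti (hκcont : ContinuousOn κ (Set.Ici 0)) {a b : ℝ} (ha : 0 ≤ a)
    (hab : a ≤ b) : phiF κ b ≤ phiF κ a := by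
  rw [phiF, phiF, Real.exp_le_exp]
  have := I_mono hκcont ha hab
  nlinarith

/-- `φ` is constant equal to `φ(R₀)` on `[R₀, ∞)`. -/
private lemma phiF_eq_of_R0_le (hκcont : ContinuousOn κ (Set.Ici 0))
    (hκliminf : ∃ ε > (0 : ℝ), ∃ R : ℝ, ∀ r ≥ R, ε ≤ κ r)
    {r : ℝ} (hr : R0 κ ≤ r) : phiF κ r = phiF κ (R0 κ) := by
  have hR0 : 0 ≤ R0 κ := R0_nonneg hκliminf
  have hr0 : 0 ≤ r := hR0.trans hr
  have hadd := intervalIntegral.integral_add_adjacent_intervals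
    (negpart_intInt hκcont le_rfl hR0) (negpart_intInt hκcont hR0 hr0)
  have hzero : (∫ s in (R0 κ)..r, s * max 0 (-κ s)) = 0 := by
    rw [show (0:ℝ) = ∫ s in (R0 κ)..r, (0:ℝ) by simp]
    apply intervalIntegral.integral_congr
    intro t ht
    rw [Set.uIcc_of_le hr] at ht
    have : 0 ≤ κ t := kappa_nonneg hκcont hκliminf ht.1
    simp [max_eq_left (neg_nonpos.2 this)]
  rw [phiF, phiF]
  rw [← hadd, hzero, add_zero]

private lemma phiF_R0_le (hκcont : ContinuousOn κ (Set.Ici 0))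
    (hκliminf : ∃ ε > (0 : ℝ), ∃ R : ℝ, ∀ r ≥ R, ε ≤ κ r)
    {r : ℝ} (hr : 0 ≤ r) : phiF κ (R0 κ) ≤ phiF κ r := by
  rcases le_total r (R0 κ) with h | h
  · exact phiF_anti hκcont hr h
  · exact (phiF_eq_of_R0_le hκcont hκliminf h).ge

private lemma phiF_contOn (hκcont : ContinuousOn κ (Set.Ici 0)) {b : ℝ} (hb : 0 ≤ b) :
    ContinuousOn (phiF κ) (Set.Icc 0 b) := by
  have h1 : ContinuousOn (fun r => ∫ s in (0:ℝ)..r, s * max 0 (-κ s)) (Set.Icc 0 b) := by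
    have := intervalIntegral.continuousOn_primitive_interval
      (f := fun s : ℝ => s * max 0 (-κ s)) (a := (0:ℝ)) (b := b) (μ := volume)
      (((negpart_contOn hκcont).mono (uIcc_subset_Ici le_rfl hb)).integrableOn_compact
        (isCompact_uIcc))
    rwa [Set.uIcc_of_le hb] at this
  exact Real.continuous_exp.comp_continuousOn (continuousOn_const.mul h1)

private lemma phiF_intInt (hκcont : ContinuousOn κ (Set.Ici 0)) {b : ℝ} (hb : 0 ≤ b) :
    IntervalIntegrable (phiF κ) volume 0 b := by
  apply ContinuousOn.intervalIntegrable
  rw [Set.uIcc_of_le hb]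
  exact phiF_contOn hκcont hb

private lemma phiF_intInt' (hκcont : ContinuousOn κ (Set.Ici 0)) {a b : ℝ} (ha : 0 ≤ a)
    (hab : a ≤ b) : IntervalIntegrable (phiF κ) volume a b := by
  apply ContinuousOn.intervalIntegrable
  exact (phiF_contOn hκcont (ha.trans hab)).mono
    (by rw [Set.uIcc_of_le hab]; exact fun x hx => ⟨ha.trans hx.1, hx.2⟩)

private lemma PhiF_le (hκcont : ContinuousOn κ (Set.Ici 0)) {r : ℝ} (hr : 0 ≤ r) :
    PhiF κ r ≤ r := by
  have h := intervalIntegral.integral_mono_on (μ := volume) hr (phiF_intInt hκcont hr)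
    (intervalIntegrable_const (c := (1:ℝ)))
    (fun x hx => phiF_le_one hκcont hx.1)
  simpa [PhiF] using h

private lemma PhiF_ge (hκcont : ContinuousOn κ (Set.Ici 0))
    (hκliminf : ∃ ε > (0 : ℝ), ∃ R : ℝ, ∀ r ≥ R, ε ≤ κ r)
    {r : ℝ} (hr : 0 ≤ r) : phiF κ (R0 κ) * r ≤ PhiF κ r := by
  have h := intervalIntegral.integral_mono_on (μ := volume) hr
    (intervalIntegrable_const (c := phiF κ (R0 κ))) (phiF_intInt hκcont hr)
    (fun x hx => phiF_R0_le hκcont hκliminf hx.1)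
  simpa [PhiF, mul_comm] using h

private lemma PhiF_nonneg (hκcont : ContinuousOn κ (Set.Ici 0))
    (hκliminf : ∃ ε > (0 : ℝ), ∃ R : ℝ, ∀ r ≥ R, ε ≤ κ r)
    {r : ℝ} (hr : 0 ≤ r) : 0 ≤ PhiF κ r :=
  le_trans (mul_nonneg (phiF_pos _).le hr) (PhiF_ge hκcont hκliminf hr)

private lemma PhiF_pos (hκcont : ContinuousOn κ (Set.Ici 0))
    (hκliminf : ∃ ε > (0 : ℝ), ∃ R : ℝ, ∀ r ≥ R, ε ≤ κ r)
    {r : ℝ} (hr : 0 < r) : 0 < PhiF κ r :=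
  lt_of_lt_of_le (mul_pos (phiF_pos _) hr) (PhiF_ge hκcont hκliminf hr.le)

private lemma PhiF_contOn (hκcont : ContinuousOn κ (Set.Ici 0)) {b : ℝ} (hb : 0 ≤ b) :
    ContinuousOn (PhiF κ) (Set.Icc 0 b) := by
  have := intervalIntegral.continuousOn_primitive_interval
    (f := phiF κ) (a := (0:ℝ)) (b := b) (μ := volume)
    (by
      rw [Set.uIcc_of_le hb]
      exact (phiF_contOn hκcont hb).integrableOn_compact isCompact_Icc)
  rwa [Set.uIcc_of_le hb] at this

/-- The integrand `Φ/φ`. -/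
private lemma q_contOn (hκcont : ContinuousOn κ (Set.Ici 0)) {b : ℝ} (hb : 0 ≤ b) :
    ContinuousOn (fun s => PhiF κ s / phiF κ s) (Set.Icc 0 b) :=
  (PhiF_contOn hκcont hb).div (phiF_contOn hκcont hb) (fun x _ => (phiF_pos x).ne')

private lemma q_intInt (hκcont : ContinuousOn κ (Set.Ici 0)) {a b : ℝ} (ha : 0 ≤ a)
    (hab : a ≤ b) : IntervalIntegrable (fun s => PhiF κ s / phiF κ s) volume a b := by
  apply ContinuousOn.intervalIntegrable
  exact (q_contOn hκcont (ha.trans hab)).mono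
    (by rw [Set.uIcc_of_le hab]; exact fun x hx => ⟨ha.trans hx.1, hx.2⟩)

private lemma q_nonneg (hκcont : ContinuousOn κ (Set.Ici 0))
    (hκliminf : ∃ ε > (0 : ℝ), ∃ R : ℝ, ∀ r ≥ R, ε ≤ κ r)
    {s : ℝ} (hs : 0 ≤ s) : 0 ≤ PhiF κ s / phiF κ s :=
  div_nonneg (PhiF_nonneg hκcont hκliminf hs) (phiF_pos s).le

private lemma J_pos (hκcont : ContinuousOn κ (Set.Ici 0))
    (hκliminf : ∃ ε > (0 : ℝ), ∃ R : ℝ, ∀ r ≥ R, ε ≤ κ r) (hR1 : 0 < R1 κ) :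
    0 < ∫ s in (0:ℝ)..R1 κ, PhiF κ s / phiF κ s := by
  apply intervalIntegral.intervalIntegral_pos_of_pos_on (q_intInt hκcont le_rfl hR1.le)
    _ hR1
  intro x hx
  exact div_pos (PhiF_pos hκcont hκliminf hx.1) (phiF_pos x)

private lemma gF_bounds (hκcont : ContinuousOn κ (Set.Ici 0))
    (hκliminf : ∃ ε > (0 : ℝ), ∃ R : ℝ, ∀ r ≥ R, ε ≤ κ r) (hR1 : 0 < R1 κ)
    {r : ℝ} (hr : 0 ≤ r) : 1 / 2 ≤ gF κ r ∧ gF κ r ≤ 1 := by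
  set m := min r (R1 κ) with hm
  have hm0 : 0 ≤ m := le_min hr hR1.le
  have hmR1 : m ≤ R1 κ := min_le_right _ _
  set J := ∫ s in (0:ℝ)..R1 κ, PhiF κ s / phiF κ s with hJ
  have hJpos := J_pos hκcont hκliminf hR1
  set Jm := ∫ s in (0:ℝ)..m, PhiF κ s / phiF κ s with hJm
  have hJm0 : 0 ≤ Jm :=
    intervalIntegral.integral_nonneg hm0 fun u hu => q_nonneg hκcont hκliminf hu.1
  have hJmJ : Jm ≤ J := by
    have hadd := intervalIntegral.integral_add_adjacent_intervals
      (q_intInt hκcont le_rfl hm0) (q_intInt hκcont hm0 hmR1)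
    have hnn : 0 ≤ ∫ s in m..R1 κ, PhiF κ s / phiF κ s :=
      intervalIntegral.integral_nonneg hmR1 fun u hu =>
        q_nonneg hκcont hκliminf (hm0.trans hu.1)
    rw [hJm, hJ]
    linarith [hadd]
  have hcJ : cF κ * J = 1 := inv_mul_cancel₀ hJpos.ne'
  have hcpos : 0 < cF κ := inv_pos.2 hJpos
  constructor
  · rw [gF, ← hm, ← hJm]
    have : cF κ / 2 * Jm ≤ cF κ / 2 * J := by
      apply mul_le_mul_of_nonneg_left hJmJ (by positivity)
    nlinarith
  · rw [gF, ← hm, ← hJm]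
    nlinarith

private lemma gF_contOn (hκcont : ContinuousOn κ (Set.Ici 0))
    (hR1 : 0 < R1 κ) {b : ℝ} (hb : 0 ≤ b) :
    ContinuousOn (gF κ) (Set.Icc 0 b) := by
  have hJcont : ContinuousOn (fun x => ∫ s in (0:ℝ)..x, PhiF κ s / phiF κ s)
      (Set.Icc 0 (R1 κ)) := by
    have := intervalIntegral.continuousOn_primitive_interval
      (f := fun s => PhiF κ s / phiF κ s) (a := (0:ℝ)) (b := R1 κ) (μ := volume)
      (by
        rw [Set.uIcc_of_le hR1.le]
        exact (q_contOn hκcont hR1.le).integrableOn_compact isCompact_Icc)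
    rwa [Set.uIcc_of_le hR1.le] at this
  have hmin : ContinuousOn (fun r : ℝ => min r (R1 κ)) (Set.Icc 0 b) :=
    (continuous_id.min continuous_const).continuousOn
  have hmaps : Set.MapsTo (fun r : ℝ => min r (R1 κ)) (Set.Icc 0 b) (Set.Icc 0 (R1 κ)) :=
    fun x hx => ⟨le_min hx.1 hR1.le, min_le_right _ _⟩
  have := hJcont.comp hmin hmaps
  unfold gF
  exact continuousOn_const.sub (continuousOn_const.mul this)

end Aux

/-- for all `r ≥ 0`, `φ(R₀) r / 2 ≤ Φ(r)/2 ≤ f(r) ≤ Φ(r) ≤ r`. -/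
theorem stmt4 (κ : ℝ → ℝ) (hκcont : ContinuousOn κ (Set.Ici 0))
    (hκliminf : ∃ ε > (0 : ℝ), ∃ R : ℝ, ∀ r ≥ R, ε ≤ κ r) (hR1 : 0 < R1 κ) :
    ∀ r : ℝ, 0 ≤ r →
      phiF κ (R0 κ) * r / 2 ≤ PhiF κ r / 2 ∧ PhiF κ r / 2 ≤ fF κ r ∧
      fF κ r ≤ PhiF κ r ∧ PhiF κ r ≤ r := by
  intro r hr
  have hφg_int : IntervalIntegrable (fun s => phiF κ s * gF κ s) volume 0 r := by
    apply ContinuousOn.intervalIntegrable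
    rw [Set.uIcc_of_le hr]
    exact (phiF_contOn hκcont hr).mul (gF_contOn hκcont hR1 hr)
  refine ⟨by linarith [PhiF_ge hκcont hκliminf hr], ?_, ?_, PhiF_le hκcont hr⟩
  · -- Φ/2 ≤ f
    have h := intervalIntegral.integral_mono_on (μ := volume) hr
      (((phiF_intInt hκcont hr)).div_const 2) hφg_int
      (fun x hx => ?_)
    · have h2 : (∫ s in (0:ℝ)..r, phiF κ s / 2) = PhiF κ r / 2 := by
        rw [PhiF, intervalIntegral.integral_div]
      rw [fF]; linarith [h, h2.symm.le, h2.le]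
    · have hg := (gF_bounds hκcont hκliminf hR1 hx.1).1
      have hφ := (phiF_pos (κ := κ) x).le
      calc phiF κ x / 2 = phiF κ x * (1/2) := by ring
        _ ≤ phiF κ x * gF κ x := by
            exact mul_le_mul_of_nonneg_left hg hφ
  · -- f ≤ Φ
    have h := intervalIntegral.integral_mono_on (μ := volume) hr hφg_int
      (phiF_intInt hκcont hr) (fun x hx => ?_)
    · rw [fF]; exact h
    · have hg := (gF_bounds hκcont hκliminf hR1 hx.1).2
      have hφ := (phiF_pos (κ := κ) x).le
      calc phiF κ x * gF κ x ≤ phiF κ x * 1 := mul_le_mul_of_nonneg_left hg hφ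
        _ = phiF κ x := mul_one _
end

section
/- Let V : ℝ^d → ℝ be continuously differentiable with ⟨∇V(x) − ∇V(y), x − y⟩ ≥ m_V ‖x − y‖² − M_V for all x, y, where m_V > 0 and M_V ≥ 0, and let W : ℝ^d → ℝ be differentiable with ‖∇W(z)‖ ≤ η ‖z‖ for all z. Then for every probability measure μ on ℝ^d with m = ∫ ‖x‖² μ(dx) < ∞, −2 ∫ ⟨x, ∇V(x)⟩ μ(dx) − ∫∫ ⟨x − y, ∇W(x − y)⟩ μ(dx) μ(dy) ≤ 2 M_V + 2(η − m_V) m + 2 ‖∇V(0)‖ m^{1/2}. -/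
open MeasureTheory Real Set
open scoped RealInnerProductSpace

/-! Testing the monotonicity condition against `y = 0` gives
`⟪x, ∇V x⟫ ≥ m_V ‖x‖² - M_V - ‖∇V 0‖ ‖x‖`, and `∫ ‖x‖ ≤ m^{1/2}` by Jensen.
For the interaction term, `‖∇W z‖ ≤ η ‖z‖` bounds `-⟪z, ∇W z⟫` by `η ‖z‖²`, and
`∫∫ ‖x - y‖² = 2 m - 2 ‖∫ x‖²`; the correction `-2 η ‖∫ x‖²` is nonpositive because the bound
on `∇W` at `z = ∫ x` forces `η ≥ 0` unless `∫ x = 0`. -/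

theorem sq_integral_le_integral_sq {α : Type*} [MeasurableSpace α] {μ : Measure α}
    [IsProbabilityMeasure μ] {f : α → ℝ} (hf : MemLp f 2 μ) :
    (∫ a, f a ∂μ) ^ 2 ≤ ∫ a, f a ^ 2 ∂μ := by
  have h := ProbabilityTheory.variance_nonneg f μ
  rw [ProbabilityTheory.variance_eq_sub hf] at h
  simpa using h

theorem integral_norm_le_sqrt_integral_norm_sq {F : Type*} [NormedAddCommGroup F]
    [MeasurableSpace F] {μ : Measure F} [IsProbabilityMeasure μ] (hμ : MemLp (fun x : F => x) 2 μ) :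
    ∫ x, ‖x‖ ∂μ ≤ √(∫ x, ‖x‖ ^ 2 ∂μ) :=
  Real.le_sqrt_of_sq_le (sq_integral_le_integral_sq hμ.norm)

theorem MeasureTheory.MemLp.integrable_norm_sq {α F : Type*} [MeasurableSpace α]
    [NormedAddCommGroup F] {μ : Measure α} {f : α → F} (hf : MemLp f 2 μ) :
    Integrable (fun a => ‖f a‖ ^ 2) μ :=
  (memLp_two_iff_integrable_sq_norm hf.1).1 hf

theorem measurable_gradient {E : Type*} [NormedAddCommGroup E] [InnerProductSpace ℝ E]
    [CompleteSpace E] [MeasurableSpace E] [BorelSpace E] (f : E → ℝ) :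
    Measurable (gradient f) :=
  (InnerProductSpace.toDual ℝ E).symm.continuous.measurable.comp (measurable_fderiv ℝ f)

section SecondMoment

variable {E : Type*} [NormedAddCommGroup E] [InnerProductSpace ℝ E] [MeasurableSpace E]
  {μ : Measure E}

theorem mul_integral_norm_sq_sub_le_integral_inner_self_apply [IsProbabilityMeasure μ]
    {G : E → E} {m M : ℝ} (hG : ∀ x, m * ‖x‖ ^ 2 - M ≤ ⟪G x - G 0, x⟫)
    (hμ : MemLp (fun x : E => x) 2 μ) (hGint : Integrable (fun x => ⟪x, G x⟫) μ) :
    m * ∫ x, ‖x‖ ^ 2 ∂μ - M - ‖G 0‖ * √(∫ x, ‖x‖ ^ 2 ∂μ) ≤ ∫ x, ⟪x, G x⟫ ∂μ := by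
  have hpoint : ∀ x, m * ‖x‖ ^ 2 - M - ‖G 0‖ * ‖x‖ ≤ ⟪x, G x⟫ := fun x => by
    have h := hG x
    rw [inner_sub_left, real_inner_comm x (G x)] at h
    linarith [neg_le_of_abs_le (abs_real_inner_le_norm (G 0) x)]
  have hsq : Integrable (fun x : E => ‖x‖ ^ 2) μ := hμ.integrable_norm_sq
  have hnorm : Integrable (fun x : E => ‖x‖) μ := (hμ.integrable one_le_two).norm
  calc m * ∫ x, ‖x‖ ^ 2 ∂μ - M - ‖G 0‖ * √(∫ x, ‖x‖ ^ 2 ∂μ)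
      ≤ m * ∫ x, ‖x‖ ^ 2 ∂μ - M - ‖G 0‖ * ∫ x, ‖x‖ ∂μ := by
        gcongr; exact integral_norm_le_sqrt_integral_norm_sq hμ
    _ = ∫ x, (m * ‖x‖ ^ 2 - M - ‖G 0‖ * ‖x‖) ∂μ := by
        rw [integral_sub ?_ (hnorm.const_mul _),
          integral_sub (hsq.const_mul m) (integrable_const M),
          integral_const_mul, integral_const_mul, integral_const, probReal_univ, one_smul]
        exact (hsq.const_mul m).sub (integrable_const M)
    _ ≤ ∫ x, ⟪x, G x⟫ ∂μ :=
        integral_mono (((hsq.const_mul m).sub (integrable_const M)).sub (hnorm.const_mul _))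
          hGint hpoint

variable [CompleteSpace E] [IsProbabilityMeasure μ]

theorem integral_norm_sub_sq (hμ : MemLp (fun x : E => x) 2 μ) (x : E) :
    ∫ y, ‖x - y‖ ^ 2 ∂μ = ‖x‖ ^ 2 - 2 * ⟪x, ∫ y, y ∂μ⟫ + ∫ y, ‖y‖ ^ 2 ∂μ := by
  have hinner : Integrable (fun y => 2 * ⟪x, y⟫) μ :=
    ((hμ.integrable one_le_two).const_inner x).const_mul 2
  simp_rw [norm_sub_sq_real]
  rw [integral_add ?_ hμ.integrable_norm_sq, integral_sub (integrable_const _) hinner,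
    integral_const_mul, integral_inner (hμ.integrable one_le_two), integral_const, probReal_univ,
    one_smul]
  exact (integrable_const _).sub hinner

theorem integral_integral_norm_sub_sq (hμ : MemLp (fun x : E => x) 2 μ) :
    ∫ x, ∫ y, ‖x - y‖ ^ 2 ∂μ ∂μ = 2 * ∫ x, ‖x‖ ^ 2 ∂μ - 2 * ‖∫ x, x ∂μ‖ ^ 2 := by
  have hid : Integrable (fun x : E => x) μ := hμ.integrable one_le_two
  have hinner : Integrable (fun x => 2 * ⟪x, ∫ y, y ∂μ⟫) μ := (hid.inner_const _).const_mul 2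
  have hsq := hμ.integrable_norm_sq
  have hmean : ∫ x, ⟪x, ∫ y, y ∂μ⟫ ∂μ = ‖∫ x, x ∂μ‖ ^ 2 := by
    simp_rw [real_inner_comm (∫ y, y ∂μ)]
    rw [integral_inner hid, real_inner_self_eq_norm_sq]
  simp_rw [integral_norm_sub_sq hμ]
  rw [integral_add ?_ (integrable_const _), integral_sub hsq hinner,
    integral_const_mul, hmean, integral_const, probReal_univ, one_smul]
  · ring
  · exact hsq.sub hinner

theorem neg_integral_integral_inner_sub_apply_le [BorelSpace E] [SecondCountableTopology E]
    {G : E → E} (hGm : Measurable G) {η : ℝ} (hG : ∀ z, ‖G z‖ ≤ η * ‖z‖)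
    (hμ : MemLp (fun x : E => x) 2 μ) :
    -∫ x, ∫ y, ⟪x - y, G (x - y)⟫ ∂μ ∂μ ≤ 2 * η * ∫ x, ‖x‖ ^ 2 ∂μ := by
  have hpoint : ∀ z, |⟪z, G z⟫| ≤ η * ‖z‖ ^ 2 := fun z =>
    (abs_real_inner_le_norm z (G z)).trans (by nlinarith [hG z, norm_nonneg z])
  have hD : Integrable (fun p : E × E => ‖p.1 - p.2‖ ^ 2) (μ.prod μ) :=
    ((hμ.comp_fst μ).sub (hμ.comp_snd μ)).integrable_norm_sq
  have hF : Integrable (fun p : E × E => ⟪p.1 - p.2, G (p.1 - p.2)⟫) (μ.prod μ) := by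
    have hsub : Measurable fun p : E × E => p.1 - p.2 := measurable_fst.sub measurable_snd
    exact (hD.const_mul η).mono' (hsub.inner (hGm.comp hsub)).aestronglyMeasurable
      (Filter.Eventually.of_forall fun p => hpoint _)
  have hmean : 0 ≤ η * ‖∫ x, x ∂μ‖ ^ 2 := by
    nlinarith [norm_nonneg (∫ x, x ∂μ), (norm_nonneg _).trans (hG (∫ x, x ∂μ))]
  rw [integral_integral (f := fun x y => ⟪x - y, G (x - y)⟫) hF, ← integral_neg]
  calc ∫ p, -⟪p.1 - p.2, G (p.1 - p.2)⟫ ∂(μ.prod μ)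
      ≤ ∫ p, η * ‖p.1 - p.2‖ ^ 2 ∂(μ.prod μ) :=
        integral_mono hF.neg (hD.const_mul η) fun p => (neg_le_abs _).trans (hpoint _)
    _ = η * (2 * ∫ x, ‖x‖ ^ 2 ∂μ - 2 * ‖∫ x, x ∂μ‖ ^ 2) := by
        rw [integral_const_mul, ← integral_integral (f := fun x y => ‖x - y‖ ^ 2) hD,
          integral_integral_norm_sub_sq hμ]
    _ ≤ 2 * η * ∫ x, ‖x‖ ^ 2 ∂μ := by linarith

end SecondMoment

theorem stmt16_general {d : ℕ} (V W : EuclideanSpace ℝ (Fin d) → ℝ)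
    (mV MV : ℝ)
    (hVconv : ∀ x y : EuclideanSpace ℝ (Fin d),
      mV * ‖x - y‖ ^ 2 - MV ≤ ⟪gradient V x - gradient V y, x - y⟫)
    (η : ℝ) (hgrad : ∀ z : EuclideanSpace ℝ (Fin d), ‖gradient W z‖ ≤ η * ‖z‖)
    (μ : Measure (EuclideanSpace ℝ (Fin d))) [IsProbabilityMeasure μ]
    (hμ2 : Integrable (fun x => ‖x‖ ^ 2) μ)
    (hVint : Integrable (fun x => ⟪x, gradient V x⟫) μ) :
    -2 * ∫ x, ⟪x, gradient V x⟫ ∂μ - ∫ x, ∫ y, ⟪x - y, gradient W (x - y)⟫ ∂μ ∂μ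
      ≤ 2 * MV + 2 * (η - mV) * ∫ x, ‖x‖ ^ 2 ∂μ
        + 2 * ‖gradient V 0‖ * Real.sqrt (∫ x, ‖x‖ ^ 2 ∂μ) := by
  have hμ : MemLp (fun x => x) 2 μ :=
    (memLp_two_iff_integrable_sq_norm aestronglyMeasurable_id).2 hμ2
  have hV := mul_integral_norm_sq_sub_le_integral_inner_self_apply
    (fun x => by simpa using hVconv x 0) hμ hVint
  have hW := neg_integral_integral_inner_sub_apply_le (measurable_gradient W) hgrad hμ
  linarith

/-- if `⟨∇V(x) − ∇V(y), x − y⟩ ≥ m_V ‖x − y‖² − M_V` with `m_V > 0`, `M_V ≥ 0`,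
and `‖∇W(z)‖ ≤ η‖z‖`, then for every probability measure `μ` with finite second moment
`m = ∫ ‖x‖² μ(dx)`,
`−2 ∫ ⟨x, ∇V(x)⟩ μ(dx) − ∫∫ ⟨x − y, ∇W(x − y)⟩ μ(dx) μ(dy)
  ≤ 2 M_V + 2(η − m_V) m + 2 ‖∇V(0)‖ m^{1/2}`. -/
theorem stmt16 {d : ℕ} (V W : EuclideanSpace ℝ (Fin d) → ℝ)
    (hV : ContDiff ℝ 1 V)
    (mV MV : ℝ) (hmV : 0 < mV) (hMV : 0 ≤ MV)
    (hVconv : ∀ x y : EuclideanSpace ℝ (Fin d),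
      mV * ‖x - y‖ ^ 2 - MV ≤ ⟪gradient V x - gradient V y, x - y⟫)
    (hW : Differentiable ℝ W)
    (η : ℝ) (hgrad : ∀ z : EuclideanSpace ℝ (Fin d), ‖gradient W z‖ ≤ η * ‖z‖)
    (μ : Measure (EuclideanSpace ℝ (Fin d))) [IsProbabilityMeasure μ]
    (hμ2 : Integrable (fun x => ‖x‖ ^ 2) μ)
    (hVint : Integrable (fun x => ⟪x, gradient V x⟫) μ) :
    -2 * ∫ x, ⟪x, gradient V x⟫ ∂μ - ∫ x, ∫ y, ⟪x - y, gradient W (x - y)⟫ ∂μ ∂μ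
      ≤ 2 * MV + 2 * (η - mV) * ∫ x, ‖x‖ ^ 2 ∂μ
        + 2 * ‖gradient V 0‖ * Real.sqrt (∫ x, ‖x‖ ^ 2 ∂μ) :=
  stmt16_general V W mV MV hVconv η hgrad μ hμ2 hVint
end
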